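/- Let θ, ψ : ℝ → ℝ be continuously differentiable, let J ⊂ ℝ be an open interval and let M > δ > 0 be constants such that θ'(s) > M and ψ'(r) + δ < M for all r, s ∈ J. Let x > 1 satisfy φ←(x) > κ(2M/δ - 1)(x - 1), and let ū ∈ ℝ and ξ̄ > 0 be such that ū - φ←(σ)ξ̄ + κσξ̄ ∈ J and ū - φ←(σ)ξ̄ - κσξ̄ ∈ J for every σ ∈ [1, x]. Then ∫₁ˣ [ θ'(ū - φ←(σ)ξ̄ + κσξ̄)(φ←'(σ) - κ) - ψ'(ū - φ←(σ)ξ̄ - κσξ̄)(φ←'(σ) + κ) ] dσ > 0. (Equivalently, the change of φ(r,s) = θ(s) - ψ(r) across the incoming backward shock of ξ-ratio x with left state (ξ̄, ū) is strictly negative; this is the key inequality in Case 1 of the proof that the isentropic p-system with γ > 1 admits no nontrivial Glimm-type TVD field.) -/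

import Mathlib

open Real Set Filter Topology

/-- κ = √γ / α with α = (γ-1)/2. -/
noncomputable def kappa (γ : ℝ) : ℝ := Real.sqrt γ / ((γ - 1) / 2)

/-- The shock branch x ↦ √((1 - x^{-1/α})(x^{γ/α} - 1)), α = (γ-1)/2. -/
noncomputable def shockPart (γ : ℝ) (x : ℝ) : ℝ :=
  Real.sqrt ((1 - x ^ (-(1 : ℝ) / ((γ - 1) / 2))) * (x ^ (γ / ((γ - 1) / 2)) - 1))

/-- Backward auxiliary function φ← : rarefaction branch κ(x-1) for x ≤ 1,
    shock branch for x ≥ 1 (they agree, with value 0, at x = 1). -/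
noncomputable def phiB (γ : ℝ) (x : ℝ) : ℝ :=
  if x ≤ 1 then kappa γ * (x - 1) else shockPart γ x

/-- Forward auxiliary function φ→ : shock branch -√(...) for x ≤ 1,
    rarefaction branch κ(x-1) for x ≥ 1 (they agree, with value 0, at x = 1). -/
noncomputable def phiF (γ : ℝ) (x : ℝ) : ℝ :=
  if x < 1 then -shockPart γ x else kappa γ * (x - 1)

/-!
On the shock branch φ← = √(u v) with u = 1 - σ^(-1/α), v = σ^(γ/α) - 1, and by AM-GM
φ←' = (u' v + u v') / (2 √(u v)) ≥ √(u' v') = κ, the powers of σ in u' v' cancelling.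
So φ←' - κ ≥ 0 and φ←' + κ > 0, and the bounds θ' > M, ψ' < M - δ make the integrand
at least δ φ←' - (2M - δ) κ, whose integral over [1, x] is δ φ←(x) - (2M - δ) κ (x - 1) > 0.
Integrability of φ←' is automatic, as it is a nonnegative derivative.
-/

open MeasureTheory intervalIntegral

lemma sqrt_mul_le_add_div_two_sqrt_mul {u v u' v' : ℝ} (hu : 0 < u) (hv : 0 < v)
    (hu' : 0 ≤ u') (hv' : 0 ≤ v') :
    √(u' * v') ≤ (u' * v + u * v') / (2 * √(u * v)) := by
  rw [le_div_iff₀ (by positivity)]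
  have h := two_mul_le_add_sq √(u' * v) √(u * v')
  rw [sq_sqrt (by positivity), sq_sqrt (by positivity), mul_assoc,
    ← sqrt_mul (by positivity)] at h
  calc √(u' * v') * (2 * √(u * v)) = 2 * √(u' * v * (u * v')) := by
        rw [mul_left_comm, ← sqrt_mul (by positivity)]; ring_nf
    _ ≤ _ := h

lemma le_mul_sub_sub_mul_add {A B M δ κ d : ℝ} (hA : M < A) (hB : B + δ < M) (hκ : 0 ≤ κ)
    (hd : κ ≤ d) : δ * d - (2 * M - δ) * κ ≤ A * (d - κ) - B * (d + κ) := by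
  nlinarith [mul_nonneg (sub_nonneg.2 hA.le) (sub_nonneg.2 hd),
    mul_nonneg (by linarith : 0 ≤ M - δ - B) (by linarith : 0 ≤ d + κ)]

lemma kappa_pos {γ : ℝ} (hγ : 1 < γ) : 0 < kappa γ := by
  unfold kappa
  exact div_pos (sqrt_pos.2 (zero_lt_one.trans hγ)) (by linarith)

lemma phiB_one (γ : ℝ) : phiB γ 1 = 0 := by simp [phiB]

lemma phiB_eq_shockPart {γ σ : ℝ} (hσ : 1 ≤ σ) : phiB γ σ = shockPart γ σ := by
  rcases hσ.eq_or_lt with rfl | hσ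
  · simp [phiB, shockPart]
  · simp [phiB, not_le.2 hσ]

lemma continuousOn_phiB (γ : ℝ) : ContinuousOn (phiB γ) (Ici 1) := by
  refine ContinuousOn.congr ?_ fun σ hσ => phiB_eq_shockPart hσ
  intro σ hσ
  have hσ0 : σ ≠ 0 := (zero_lt_one.trans_le hσ).ne'
  unfold shockPart
  exact ContinuousAt.continuousWithinAt (by fun_prop (disch := exact Or.inl hσ0))

lemma exists_hasDerivAt_phiB_kappa_le {γ σ : ℝ} (hγ : 1 < γ) (hσ : 1 < σ) :
    ∃ d, HasDerivAt (phiB γ) d σ ∧ kappa γ ≤ d := by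
  have hα : 0 < (γ - 1) / 2 := by linarith
  have hσ0 : σ ≠ 0 := by positivity
  set p := -(1 : ℝ) / ((γ - 1) / 2) with hp_def
  set q := γ / ((γ - 1) / 2) with hq_def
  have hp : p < 0 := div_neg_of_neg_of_pos (by norm_num) hα
  have hq : 0 < q := by positivity
  have hu : 0 < 1 - σ ^ p := sub_pos.2 (rpow_lt_one_of_one_lt_of_neg hσ hp)
  have hv : 0 < σ ^ q - 1 := sub_pos.2 (one_lt_rpow hσ hq)
  have hd := (((hasDerivAt_rpow_const (p := p) (Or.inl hσ0)).const_sub 1).mul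
    ((hasDerivAt_rpow_const (p := q) (Or.inl hσ0)).sub_const 1)).sqrt (mul_pos hu hv).ne'
  refine ⟨_, hd.congr_of_eventuallyEq ?_, ?_⟩
  · filter_upwards [Ioi_mem_nhds hσ] with y hy
    have : ¬y ≤ 1 := not_le.2 hy
    simp [phiB, this, shockPart, p, q]
  · have hexp : σ ^ (p - 1) * σ ^ (q - 1) = 1 := by
      have hsum : p - 1 + (q - 1) = 0 := by
        have : γ - 1 ≠ 0 := by linarith
        rw [hp_def, hq_def]
        field_simp
        ring
      rw [← rpow_add (by positivity), hsum, rpow_zero]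
    have hκ : kappa γ = √(-(p * σ ^ (p - 1)) * (q * σ ^ (q - 1))) := by
      rw [show -(p * σ ^ (p - 1)) * (q * σ ^ (q - 1)) = -p * q * (σ ^ (p - 1) * σ ^ (q - 1)) by
          ring, hexp, mul_one, kappa, hp_def, hq_def]
      rw [show -(-(1:ℝ) / ((γ - 1) / 2)) * (γ / ((γ - 1) / 2)) = γ / ((γ - 1) / 2) ^ 2 by
          field_simp,
        sqrt_div' _ (sq_nonneg _), sqrt_sq hα.le]
    rw [hκ]
    exact sqrt_mul_le_add_div_two_sqrt_mul hu hv
      (neg_nonneg.2 (mul_nonpos_of_nonpos_of_nonneg hp.le (rpow_nonneg (by positivity) _)))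
      (by positivity)

lemma hasDerivAt_deriv_phiB {γ σ : ℝ} (hγ : 1 < γ) (hσ : 1 < σ) :
    HasDerivAt (phiB γ) (deriv (phiB γ) σ) σ :=
  let ⟨_, hd, _⟩ := exists_hasDerivAt_phiB_kappa_le hγ hσ
  hd.differentiableAt.hasDerivAt

lemma kappa_le_deriv_phiB {γ σ : ℝ} (hγ : 1 < γ) (hσ : 1 < σ) :
    kappa γ ≤ deriv (phiB γ) σ :=
  let ⟨_, hd, hle⟩ := exists_hasDerivAt_phiB_kappa_le hγ hσ
  hd.deriv ▸ hle

lemma intervalIntegrable_deriv_phiB {γ x : ℝ} (hγ : 1 < γ) (hx : 1 ≤ x) :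
    IntervalIntegrable (deriv (phiB γ)) volume 1 x := by
  refine intervalIntegrable_deriv_of_nonneg (g := phiB γ) ?_ (fun σ hσ => ?_) (fun σ hσ => ?_)
  · exact (continuousOn_phiB γ).mono (by simp [uIcc_of_le hx, Icc_subset_Ici_self])
  · exact hasDerivAt_deriv_phiB hγ (by simpa [hx] using hσ.1)
  · exact (kappa_pos hγ).le.trans (kappa_le_deriv_phiB hγ (by simpa [hx] using hσ.1))

lemma integral_deriv_phiB {γ x : ℝ} (hγ : 1 < γ) (hx : 1 ≤ x) :
    ∫ σ in (1 : ℝ)..x, deriv (phiB γ) σ = phiB γ x := by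
  rw [integral_eq_sub_of_hasDerivAt_of_le hx ((continuousOn_phiB γ).mono Icc_subset_Ici_self)
    (fun σ hσ => hasDerivAt_deriv_phiB hγ hσ.1) (intervalIntegrable_deriv_phiB hγ hx),
    phiB_one, sub_zero]

theorem case1_key_inequality_general (γ : ℝ) (hγ : 1 < γ)
    (θ ψ : ℝ → ℝ) (hθ : ContDiff ℝ 1 θ) (hψ : ContDiff ℝ 1 ψ)
    (a c : ℝ) (M δ : ℝ) (hδ : 0 < δ)
    (hθ' : ∀ s ∈ Set.Ioo a c, M < deriv θ s)
    (hψ' : ∀ r ∈ Set.Ioo a c, deriv ψ r + δ < M)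
    (x : ℝ) (hx : 1 < x)
    (hxstrong : kappa γ * (2 * M / δ - 1) * (x - 1) < phiB γ x)
    (ubar ξbar : ℝ)
    (hmem : ∀ σ ∈ Set.Icc (1 : ℝ) x,
      ubar - phiB γ σ * ξbar + kappa γ * σ * ξbar ∈ Set.Ioo a c ∧
      ubar - phiB γ σ * ξbar - kappa γ * σ * ξbar ∈ Set.Ioo a c) :
    0 < ∫ σ in (1 : ℝ)..x,
      (deriv θ (ubar - phiB γ σ * ξbar + kappa γ * σ * ξbar)
          * (deriv (phiB γ) σ - kappa γ)
        - deriv ψ (ubar - phiB γ σ * ξbar - kappa γ * σ * ξbar)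
          * (deriv (phiB γ) σ + kappa γ)) := by
  have hφ : ContinuousOn (phiB γ) (uIcc 1 x) :=
    (continuousOn_phiB γ).mono (by simp [uIcc_of_le hx.le, Icc_subset_Ici_self])
  have hφ' := intervalIntegrable_deriv_phiB hγ hx.le
  have hθs : ContinuousOn
      (fun σ => deriv θ (ubar - phiB γ σ * ξbar + kappa γ * σ * ξbar)) (uIcc 1 x) :=
    (hθ.continuous_deriv le_rfl).comp_continuousOn (by fun_prop)
  have hψr : ContinuousOn
      (fun σ => deriv ψ (ubar - phiB γ σ * ξbar - kappa γ * σ * ξbar)) (uIcc 1 x) :=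
    (hψ.continuous_deriv le_rfl).comp_continuousOn (by fun_prop)
  have hlower : ∀ σ ∈ Ioo 1 x,
      δ * deriv (phiB γ) σ - (2 * M - δ) * kappa γ ≤
        deriv θ (ubar - phiB γ σ * ξbar + kappa γ * σ * ξbar) * (deriv (phiB γ) σ - kappa γ)
          - deriv ψ (ubar - phiB γ σ * ξbar - kappa γ * σ * ξbar)
            * (deriv (phiB γ) σ + kappa γ) := by
    intro σ hσ
    obtain ⟨hs, hr⟩ := hmem σ (Ioo_subset_Icc_self hσ)
    exact le_mul_sub_sub_mul_add (hθ' _ hs) (hψ' _ hr) (kappa_pos hγ).le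
      (kappa_le_deriv_phiB hγ hσ.1)
  have hpos : 0 < ∫ σ in (1 : ℝ)..x, (δ * deriv (phiB γ) σ - (2 * M - δ) * kappa γ) := by
    rw [integral_sub (hφ'.const_mul δ) intervalIntegrable_const,
      intervalIntegral.integral_const_mul, integral_deriv_phiB hγ hx.le,
      intervalIntegral.integral_const, smul_eq_mul]
    have := mul_lt_mul_of_pos_left hxstrong hδ
    field_simp at this
    linarith
  exact hpos.trans_le <| integral_mono_on_of_le_Ioo hx.le
    ((hφ'.const_mul δ).sub intervalIntegrable_const)
    (((hφ'.sub intervalIntegrable_const).continuousOn_mul hθs).sub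
      ((hφ'.add intervalIntegrable_const).continuousOn_mul hψr)) hlower

/-- the key inequality in Case 1 of the non-existence proof: the
    change of φ(r,s) = θ(s) - ψ(r) across a suitably strong incoming backward shock
    is strictly negative, i.e. the integral below is strictly positive. -/
theorem case1_key_inequality (γ : ℝ) (hγ : 1 < γ)
    (θ ψ : ℝ → ℝ) (hθ : ContDiff ℝ 1 θ) (hψ : ContDiff ℝ 1 ψ)
    (a c : ℝ) (M δ : ℝ) (hδ : 0 < δ) (hMδ : δ < M)
    (hθ' : ∀ s ∈ Set.Ioo a c, M < deriv θ s)
    (hψ' : ∀ r ∈ Set.Ioo a c, deriv ψ r + δ < M)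
    (x : ℝ) (hx : 1 < x)
    (hxstrong : kappa γ * (2 * M / δ - 1) * (x - 1) < phiB γ x)
    (ubar ξbar : ℝ) (hξbar : 0 < ξbar)
    (hmem : ∀ σ ∈ Set.Icc (1 : ℝ) x,
      ubar - phiB γ σ * ξbar + kappa γ * σ * ξbar ∈ Set.Ioo a c ∧
      ubar - phiB γ σ * ξbar - kappa γ * σ * ξbar ∈ Set.Ioo a c) :
    0 < ∫ σ in (1 : ℝ)..x,
      (deriv θ (ubar - phiB γ σ * ξbar + kappa γ * σ * ξbar)
          * (deriv (phiB γ) σ - kappa γ)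
        - deriv ψ (ubar - phiB γ σ * ξbar - kappa γ * σ * ξbar)
          * (deriv (phiB γ) σ + kappa γ)) :=
  case1_key_inequality_general γ hγ θ ψ hθ hψ a c M δ hδ hθ' hψ' x hx hxstrong ubar ξbar hmem
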